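/- Let S be a left cancellative monoid. Call a subset K ⊆ Ω(S) invariant if for every g ∈ I_ℓ(S) and every χ ∈ K with χ(dom g) = 1, the character X ↦ χ(g^{-1}(X)) (where g^{-1}(X) = {s ∈ dom g : g s ∈ X} ∈ J(S)) again belongs to K. Then every nonempty closed invariant subset K ⊆ Ω(S) contains ∂Ω(S). -/

import Mathlib

open scoped Classical

namespace SgC

variable {M : Type*}

/-- Composition of partial maps (`g` after `f`). -/
def pcomp (g f : M → Option M) : M → Option M := fun s => (f s).bind g

/-- The canonical partial inverse of a partial map (the genuine inverse when the map
is injective on its domain, as is the case for all maps in the left inverse hull of a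
left cancellative monoid). -/
noncomputable def pinv (f : M → Option M) : M → Option M :=
  fun t => if h : ∃ s, f s = some t then some h.choose else none

/-- Left translation `t ↦ s * t` as an everywhere-defined partial map. -/
def ptransl [Mul M] (s : M) : M → Option M := fun t => some (s * t)

/-- The identity partial map. -/
def pid : M → Option M := fun s => some s

/-- The block `q⁻¹ ∘ p`: first multiply on the left by `p`, then remove `q` on the left. -/
noncomputable def pblock [Mul M] (p : M × M) : M → Option M :=
  pcomp (pinv (ptransl p.2)) (ptransl p.1)

/-- Membership in the left inverse hull `I_ℓ(M)`: `h` is of the form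
`s₂ₙ⁻¹ s₂ₙ₋₁ ⋯ s₂⁻¹ s₁` for some `n ≥ 1` and `sᵢ ∈ M` (the list records the pairs
`(s₁,s₂), (s₃,s₄), …`, applied left to right). -/
def InInvHull [Mul M] (h : M → Option M) : Prop :=
  ∃ l : List (M × M), l ≠ [] ∧
    h = l.foldl (fun acc p => pcomp (pblock p) acc) pid

/-- Membership in the inverse hull generated by translations by elements of `σ` only
(used for canonical copies of `I_ℓ(S)` inside partial maps of a larger monoid). -/
def InInvHullOn [Mul M] (σ : Set M) (h : M → Option M) : Prop :=
  ∃ l : List (M × M), l ≠ [] ∧ (∀ p ∈ l, p.1 ∈ σ ∧ p.2 ∈ σ) ∧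
    h = l.foldl (fun acc p => pcomp (pblock p) acc) pid

/-- Domain of a partial map. -/
def pdom (h : M → Option M) : Set M := {s | h s ≠ none}

/-- `h` fixes the set `Y` pointwise (in particular `Y ⊆ dom h`). -/
def PFixes (h : M → Option M) (Y : Set M) : Prop := ∀ s ∈ Y, h s = some s

/-- Preimage of a set under a partial map. -/
def ppre (h : M → Option M) (X : Set M) : Set M := {s | ∃ x ∈ X, h s = some x}

/-- Constructible right ideals: domains of elements of the left inverse hull. -/
def IsConstructible [Mul M] (X : Set M) : Prop := ∃ h, InInvHull h ∧ X = pdom h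

/-- Membership in `J̄(S)`: sets of the form `X₀` or `X₀ ∖ (X₁ ∪ ⋯ ∪ Xₘ)` with all
`Xᵢ` constructible. -/
def IsConstructibleBar [Mul M] (X : Set M) : Prop :=
  ∃ (X₀ : Set M) (m : ℕ) (Xi : Fin m → Set M),
    IsConstructible X₀ ∧ (∀ i, IsConstructible (Xi i)) ∧ X = X₀ \ ⋃ i, Xi i

/-- `Xi` is a foundation family for `X`: each `Xi i ⊆ X` and every nonempty
constructible right ideal contained in `X` intersects some `Xi i`. -/
def IsFoundation [Mul M] (X : Set M) {ι : Type*} (Xi : ι → Set M) : Prop :=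
  (∀ i, Xi i ⊆ X) ∧
  ∀ Y : Set M, IsConstructible Y → Y.Nonempty → Y ⊆ X → ∃ i, (Y ∩ Xi i).Nonempty

/-- Strong C*-regularity. -/
def StronglyRegular (M : Type*) [Monoid M] : Prop :=
  ∀ (n : ℕ) (h : Fin n → M → Option M), (∀ k, InInvHull (h k)) →
  ∀ (m : ℕ) (X : Set M) (Xi : Fin m → Set M),
    IsConstructible X → (∀ i, IsConstructible (Xi i)) →
    (X \ ⋃ i, Xi i).Nonempty →
    (X \ ⋃ i, Xi i) ⊆ ⋃ k, {s | h k s = some s} →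
    ∃ (l : ℕ) (Y : Fin l → Set M) (kk : Fin l → Fin n),
      (∀ j, IsConstructible (Y j)) ∧
      (X \ ⋃ i, Xi i) ⊆ ⋃ j, Y j ∧
      ∀ j, PFixes (h (kk j)) (Y j)

/-- C*-regularity. -/
def Regular (M : Type*) [Monoid M] : Prop :=
  ∀ (n : ℕ) (h : Fin n → M → Option M), (∀ k, InInvHull (h k)) →
  ∀ X : Set M, IsConstructibleBar X → X.Nonempty →
    X ⊆ ⋃ k, {s | h k s = some s} →
    ∃ (l : ℕ) (Y : Fin l → Set M) (kk : Fin l → Fin n),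
      (∀ j, IsConstructibleBar (Y j)) ∧ X ⊆ ⋃ j, Y j ∧
      ∀ j, PFixes (h (kk j)) (Y j)

/-- Strong C*-regularity on the boundary. -/
def StronglyRegularOnBoundary (M : Type*) [Monoid M] : Prop :=
  ∀ (n : ℕ) (h : Fin n → M → Option M), (∀ k, InInvHull (h k)) →
  ∀ (m : ℕ) (X : Set M) (Xi : Fin m → Set M),
    IsConstructible X → (∀ i, IsConstructible (Xi i)) → (∀ i, Xi i ⊆ X) →
    (X \ ⋃ i, Xi i).Nonempty →
    (X \ ⋃ i, Xi i) ⊆ ⋃ k, {s | h k s = some s} →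
    ∃ (l : ℕ) (Y : Fin l → Set M) (kk : Fin l → Fin n),
      (∀ j, IsConstructible (Y j)) ∧ (∀ j, PFixes (h (kk j)) (Y j)) ∧
      IsFoundation X (Sum.elim Xi Y)

/-- C*-regularity on the boundary. -/
def RegularOnBoundary (M : Type*) [Monoid M] : Prop :=
  ∀ (n : ℕ) (h : Fin n → M → Option M), (∀ k, InInvHull (h k)) →
  ∀ (m : ℕ) (X : Set M) (Xi : Fin m → Set M),
    IsConstructible X → (∀ i, IsConstructible (Xi i)) → (∀ i, Xi i ⊆ X) →
    (X \ ⋃ i, Xi i).Nonempty →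
    (X \ ⋃ i, Xi i) ⊆ ⋃ k, {s | h k s = some s} →
    ∃ (l : ℕ) (Y : Fin l → Set M) (kk : Fin l → Fin n),
      (∀ j, IsConstructibleBar (Y j)) ∧ (∀ j, PFixes (h (kk j)) (Y j)) ∧
      IsFoundation X (Sum.elim Xi Y)

/-- The type of constructible right ideals `J(M)`. -/
def CIdeal (M : Type*) [Mul M] : Type _ := {X : Set M // IsConstructible X}

/-- The character space `{0,1}^{J(M)}` with the topology of pointwise convergence. -/
abbrev CharSpace (M : Type*) [Mul M] : Type _ := CIdeal M → Bool

/-- The principal character `χ_s`. -/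
noncomputable def princhar [Mul M] (s : M) : CharSpace M :=
  fun X => decide (s ∈ X.1)

/-- `Ω(M)`: the closure of the set of principal characters. -/
noncomputable def Omega (M : Type*) [Mul M] : Set (CharSpace M) :=
  closure (Set.range (princhar : M → CharSpace M))

/-- Filters on `J(M)`: nonempty collections of nonempty constructible ideals closed
under intersections and enlargements within `J(M)`. -/
def IsFilterOn [Mul M] (F : Set (CIdeal M)) : Prop :=
  F.Nonempty ∧ (∀ X ∈ F, (X.1 : Set M).Nonempty) ∧
  (∀ X ∈ F, ∀ Y ∈ F, ∀ Z : CIdeal M, Z.1 = X.1 ∩ Y.1 → Z ∈ F) ∧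
  (∀ X ∈ F, ∀ Y : CIdeal M, X.1 ⊆ Y.1 → Y ∈ F)

/-- Nonzero multiplicative `{0,1}`-valued maps on `J(M)`. -/
def IsChar [Mul M] (χ : CharSpace M) : Prop :=
  (∃ X, χ X = true) ∧
  ∀ X Y Z : CIdeal M, Z.1 = X.1 ∩ Y.1 → χ Z = (χ X && χ Y)

/-- Maximal characters: characters whose associated filter is maximal among filters. -/
def IsMaximalChar [Mul M] (χ : CharSpace M) : Prop :=
  IsChar χ ∧ IsFilterOn {X | χ X = true} ∧
  ∀ G : Set (CIdeal M), IsFilterOn G → {X | χ X = true} ⊆ G → G = {X | χ X = true}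

/-- The set of maximal characters `Ω_max(M)`. -/
def OmegaMax (M : Type*) [Mul M] : Set (CharSpace M) := {χ | IsMaximalChar χ}

/-- The boundary `∂Ω(M)`: the closure of the set of maximal characters. -/
noncomputable def BoundaryOmega (M : Type*) [Mul M] : Set (CharSpace M) :=
  closure (OmegaMax M)


/-!
A maximal character `ω` is pinned down on finitely many constructible ideals `X₁, …, Xₙ` by a
single ideal `Z` of its filter: `Z ⊆ Xᵢ` when `ω Xᵢ = 1` and `Z ∩ Xᵢ = ∅` otherwise, the
disjoint ideals being supplied by maximality. For `t ∈ Z` the right ideal `tS` lies in `Z`, so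
each `t⁻¹Xᵢ` is `S` or `∅`. Translating any `χ ∈ K` by `t` therefore gives a character of `K`
that agrees with `ω` on `X₁, …, Xₙ`, because characters in `Ω(S)` are `1` on `S` and `0` on `∅`.
Hence `Ω_max(S) ⊆ K̄ = K`.
-/

theorem pcomp_assoc (h g f : M → Option M) :
    pcomp h (pcomp g f) = pcomp (pcomp h g) f :=
  funext fun s => Option.bind_assoc (f s) g h

theorem pid_pcomp (f : M → Option M) : pcomp pid f = f := by
  funext s
  simp only [pcomp, pid]
  cases f s <;> rfl

theorem pdom_pcomp (h g : M → Option M) : pdom (pcomp h g) = ppre g (pdom h) := by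
  ext s
  simp only [pdom, ppre, pcomp, Set.mem_ofPred_eq]
  cases g s <;> simp

theorem ppre_ptransl [Mul M] (t : M) (X : Set M) : ppre (ptransl t) X = {s | t * s ∈ X} := by
  ext s
  simp [ppre, ptransl]

section Hull

variable [Mul M]

noncomputable def hullMap (l : List (M × M)) : M → Option M :=
  l.foldl (fun acc p => pcomp (pblock p) acc) pid

theorem foldl_pcomp_pblock (l : List (M × M)) (a : M → Option M) :
    l.foldl (fun acc p => pcomp (pblock p) acc) a = pcomp (hullMap l) a := by
  induction l generalizing a with
  | nil => exact (pid_pcomp a).symm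
  | cons p l ih =>
    simp only [List.foldl_cons, hullMap]
    rw [ih, ih, pcomp_assoc]
    rfl

theorem hullMap_append (l₁ l₂ : List (M × M)) :
    hullMap (l₁ ++ l₂) = pcomp (hullMap l₂) (hullMap l₁) := by
  rw [hullMap, List.foldl_append, foldl_pcomp_pblock]
  rfl

theorem hullMap_cons (p : M × M) (l : List (M × M)) :
    hullMap (p :: l) = pcomp (hullMap l) (pblock p) :=
  hullMap_append [p] l

theorem InInvHull.pcomp {g h : M → Option M} (hg : InInvHull g) (hh : InInvHull h) :
    InInvHull (pcomp h g) := by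
  obtain ⟨l₁, hl₁, rfl⟩ := hg
  obtain ⟨l₂, -, rfl⟩ := hh
  exact ⟨l₁ ++ l₂, by simp [hl₁], (hullMap_append l₁ l₂).symm⟩

theorem IsConstructible.ppre {g : M → Option M} (hg : InInvHull g) {X : Set M}
    (hX : IsConstructible X) : IsConstructible (ppre g X) := by
  obtain ⟨h, hh, rfl⟩ := hX
  exact ⟨pcomp h g, hg.pcomp hh, (pdom_pcomp h g).symm⟩

end Hull

section LeftCancel

variable [Mul M] [IsLeftCancelMul M]

theorem pinv_ptransl_eq_some_iff {p t u : M} : pinv (ptransl p) u = some t ↔ p * t = u := by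
  simp only [pinv, ptransl, Option.some.injEq]
  split_ifs with hex
  · have hc : p * hex.choose = u := hex.choose_spec
    simp only [Option.some.injEq]
    exact ⟨fun h => h ▸ hc, fun h => mul_left_cancel (hc.trans h.symm)⟩
  · simp only [false_iff]
    exact fun h => hex ⟨t, h⟩

theorem pblock_eq_some_iff {p : M × M} {s t : M} : pblock p s = some t ↔ p.2 * t = p.1 * s :=
  pinv_ptransl_eq_some_iff

theorem hullMap_reverse_swap {l : List (M × M)} {s t : M} (h : hullMap l s = some t) :
    hullMap (l.map Prod.swap).reverse t = some s := by
  induction l generalizing s t with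
  | nil =>
    obtain rfl := Option.some.inj h
    rfl
  | cons p l ih =>
    rw [hullMap_cons] at h
    obtain ⟨m, hm, hmt⟩ := Option.bind_eq_some_iff.mp h
    rw [List.map_cons, List.reverse_cons, hullMap_append]
    refine Option.bind_eq_some_iff.mpr ⟨m, ih hmt, ?_⟩
    rw [hullMap_cons]
    exact Option.bind_eq_some_iff.mpr
      ⟨s, (pblock_eq_some_iff (p := p.swap)).mpr (pblock_eq_some_iff.mp hm).symm, rfl⟩

theorem InInvHull.exists_inverse {g : M → Option M} (hg : InInvHull g) :
    ∃ g', InInvHull g' ∧ ∀ s t, g s = some t → g' t = some s := by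
  obtain ⟨l, hl, rfl⟩ := hg
  exact ⟨_, ⟨_, by simpa using hl, rfl⟩, fun s t => hullMap_reverse_swap⟩

theorem IsConstructible.inter {X Y : Set M} (hX : IsConstructible X) (hY : IsConstructible Y) :
    IsConstructible (X ∩ Y) := by
  obtain ⟨g, hg, rfl⟩ := hX
  obtain ⟨g', hg', hinv⟩ := hg.exists_inverse
  -- `X ∩ Y = g⁻¹ (g'⁻¹ Y)` because `g'` undoes `g` on `X = dom g`
  convert (hY.ppre hg').ppre hg using 1
  ext s
  simp only [pdom, Set.mem_inter_iff, Set.mem_ofPred_eq]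
  constructor
  · rintro ⟨hs, hsY⟩
    obtain ⟨m, hm⟩ := Option.ne_none_iff_exists'.mp hs
    exact ⟨m, ⟨s, hsY, hinv s m hm⟩, hm⟩
  · rintro ⟨m, ⟨y, hy, hmy⟩, hm⟩
    obtain rfl : y = s := Option.some.inj ((hmy.symm.trans (hinv s m hm)))
    exact ⟨by simp [hm], hy⟩

end LeftCancel

theorem hullMap_mul_right [Semigroup M] [IsLeftCancelMul M] {l : List (M × M)} {s t : M}
    (u : M) (h : hullMap l s = some t) : hullMap l (s * u) = some (t * u) := by
  induction l generalizing s t with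
  | nil =>
    obtain rfl := Option.some.inj h
    rfl
  | cons p l ih =>
    rw [hullMap_cons] at h ⊢
    obtain ⟨m, hm, hmt⟩ := Option.bind_eq_some_iff.mp h
    have hmu : pblock p (s * u) = some (m * u) := by
      rw [pblock_eq_some_iff] at hm ⊢
      rw [← mul_assoc, ← mul_assoc, hm]
    simp only [pcomp, hmu, Option.bind_some]
    exact ih hmt

theorem IsConstructible.mul_mem [Semigroup M] [IsLeftCancelMul M] {X : Set M}
    (hX : IsConstructible X) {s : M} (hs : s ∈ X) (u : M) : s * u ∈ X := by
  obtain ⟨_, ⟨l, -, rfl⟩, rfl⟩ := hX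
  obtain ⟨t, ht⟩ := Option.ne_none_iff_exists'.mp hs
  show hullMap l (s * u) ≠ none
  simp [hullMap_mul_right u ht]

theorem inInvHull_ptransl [MulOneClass M] [IsLeftCancelMul M] (t : M) :
    InInvHull (ptransl t) :=
  ⟨[(t, 1)], List.cons_ne_nil _ _,
    funext fun _ => (pblock_eq_some_iff.mpr (one_mul _)).symm⟩

section Characters

variable [Mul M]

theorem apply_eq_of_mem_omega {X : CIdeal M} {b : Bool} (hb : ∀ s, princhar s X = b)
    {χ : CharSpace M} (hχ : χ ∈ Omega M) : χ X = b :=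
  closure_minimal (by rintro _ ⟨s, rfl⟩; exact hb s)
    (isClosed_singleton.preimage (continuous_apply X)) hχ

theorem apply_eq_true_of_mem_omega {X : CIdeal M} (hX : X.1 = Set.univ) {χ : CharSpace M}
    (hχ : χ ∈ Omega M) : χ X = true :=
  apply_eq_of_mem_omega (fun s => by simp [princhar, hX]) hχ

theorem apply_eq_false_of_mem_omega {X : CIdeal M} (hX : X.1 = ∅) {χ : CharSpace M}
    (hχ : χ ∈ Omega M) : χ X = false :=
  apply_eq_of_mem_omega (fun s => by simp [princhar, hX]) hχ

theorem IsFilterOn.exists_mem_subset_of_finset [IsLeftCancelMul M] {F : Set (CIdeal M)}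
    (hF : IsFilterOn F) (I : Finset (CIdeal M)) (hI : ↑I ⊆ F) :
    ∃ Z ∈ F, ∀ X ∈ I, Z.1 ⊆ X.1 := by
  induction I using Finset.induction_on with
  | empty =>
    obtain ⟨Z, hZ⟩ := hF.1
    exact ⟨Z, hZ, by simp⟩
  | insert X I _ ih =>
    rw [Finset.coe_insert, Set.insert_subset_iff] at hI
    obtain ⟨Z, hZ, hZI⟩ := ih hI.2
    refine ⟨⟨Z.1 ∩ X.1, Z.2.inter X.2⟩, hF.2.2.1 Z hZ X hI.1 _ rfl, ?_⟩
    simp only [Finset.mem_insert, forall_eq_or_imp]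
    exact ⟨Set.inter_subset_right, fun Y hY => Set.inter_subset_left.trans (hZI Y hY)⟩

theorem IsMaximalChar.exists_disjoint [IsLeftCancelMul M] {ω : CharSpace M}
    (hω : IsMaximalChar ω) {X : CIdeal M} (hX : ω X = false) :
    ∃ Y : CIdeal M, ω Y = true ∧ Y.1 ∩ X.1 = ∅ := by
  by_contra! hmeet
  obtain ⟨-, hF, hmax⟩ := hω
  -- otherwise the filter generated by the filter of `ω` and `X` is strictly larger
  let G : Set (CIdeal M) := {W | ∃ Y : CIdeal M, ω Y = true ∧ Y.1 ∩ X.1 ⊆ W.1}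
  obtain ⟨Y₀, hY₀⟩ := hF.1
  have hGfilter : IsFilterOn G := by
    refine ⟨⟨X, Y₀, hY₀, Set.inter_subset_right⟩, ?_, ?_, ?_⟩
    · rintro W ⟨Y, hY, hYW⟩
      exact (hmeet Y hY).mono hYW
    · rintro W₁ ⟨Y₁, hY₁, h₁⟩ W₂ ⟨Y₂, hY₂, h₂⟩ Z hZ
      refine ⟨⟨Y₁.1 ∩ Y₂.1, Y₁.2.inter Y₂.2⟩, hF.2.2.1 Y₁ hY₁ Y₂ hY₂ _ rfl, ?_⟩
      rw [hZ]
      exact fun x hx => ⟨h₁ ⟨hx.1.1, hx.2⟩, h₂ ⟨hx.1.2, hx.2⟩⟩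
    · rintro W ⟨Y, hY, hYW⟩ W' hWW'
      exact ⟨Y, hY, hYW.trans hWW'⟩
  have hFG : {W | ω W = true} ⊆ G := fun W hW => ⟨W, hW, Set.inter_subset_left⟩
  have hXG : X ∈ G := ⟨Y₀, hY₀, Set.inter_subset_right⟩
  have hXω : X ∈ {W | ω W = true} := hmax G hGfilter hFG ▸ hXG
  exact absurd hXω (by simp [hX])

theorem IsMaximalChar.exists_separating [IsLeftCancelMul M] {ω : CharSpace M}
    (hω : IsMaximalChar ω) (I : Finset (CIdeal M)) :
    ∃ Z : CIdeal M, ω Z = true ∧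
      ∀ X ∈ I, (ω X = true → Z.1 ⊆ X.1) ∧ (ω X = false → Z.1 ∩ X.1 = ∅) := by
  have hsep : ∀ X : CIdeal M, ∃ W : CIdeal M, ω W = true ∧
      (ω X = true → W.1 ⊆ X.1) ∧ (ω X = false → W.1 ∩ X.1 = ∅) := by
    intro X
    cases hX : ω X
    · obtain ⟨W, hW, hWX⟩ := hω.exists_disjoint hX
      exact ⟨W, hW, nofun, fun _ => hWX⟩
    · exact ⟨X, hX, fun _ => subset_rfl, nofun⟩
  choose W hW hWsep using hsep
  obtain ⟨Z, hZ, hZW⟩ := hω.2.1.exists_mem_subset_of_finset (I.image W) (by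
    rw [Finset.coe_image]
    rintro _ ⟨X, -, rfl⟩
    exact hW X)
  refine ⟨Z, hZ, fun X hX => ?_⟩
  have hZWX : Z.1 ⊆ (W X).1 := hZW _ (Finset.mem_image_of_mem W hX)
  exact ⟨fun hωX => hZWX.trans ((hWsep X).1 hωX),
    fun hωX => Set.subset_eq_empty (Set.inter_subset_inter_left _ hZWX) ((hWsep X).2 hωX)⟩

def IsInvariant (K : Set (CharSpace M)) : Prop :=
  ∀ g : M → Option M, InInvHull g → ∀ χ ∈ K,
    (∀ D : CIdeal M, D.1 = pdom g → χ D = true) →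
    ∀ χ' : CharSpace M, (∀ X Y : CIdeal M, Y.1 = ppre g X.1 → χ' X = χ Y) → χ' ∈ K

end Characters

section Translation

variable [Monoid M] [IsLeftCancelMul M]

noncomputable def translChar (t : M) (χ : CharSpace M) : CharSpace M :=
  fun X => χ ⟨ppre (ptransl t) X.1, X.2.ppre (inInvHull_ptransl t)⟩

theorem IsInvariant.translChar_mem {K : Set (CharSpace M)} (hK : IsInvariant K)
    (hKΩ : K ⊆ Omega M) {χ : CharSpace M} (hχ : χ ∈ K) (t : M) : translChar t χ ∈ K := by
  refine hK _ (inInvHull_ptransl t) χ hχ (fun D hD => ?_) _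
    (fun X Y hY => congrArg χ (Subtype.ext hY.symm))
  refine apply_eq_true_of_mem_omega (hD.trans ?_) (hKΩ hχ)
  simp [pdom, ptransl]

theorem translChar_eq_true {χ : CharSpace M} (hχ : χ ∈ Omega M) {Z X : CIdeal M} {t : M}
    (ht : t ∈ Z.1) (hZX : Z.1 ⊆ X.1) : translChar t χ X = true := by
  have hpre : ppre (ptransl t) X.1 = Set.univ := by
    rw [ppre_ptransl]
    exact Set.eq_univ_of_forall fun s => hZX (Z.2.mul_mem ht s)
  exact apply_eq_true_of_mem_omega (X := ⟨_, X.2.ppre (inInvHull_ptransl t)⟩) hpre hχ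

theorem translChar_eq_false {χ : CharSpace M} (hχ : χ ∈ Omega M) {Z X : CIdeal M} {t : M}
    (ht : t ∈ Z.1) (hZX : Z.1 ∩ X.1 = ∅) : translChar t χ X = false := by
  have hpre : ppre (ptransl t) X.1 = ∅ := by
    rw [ppre_ptransl]
    exact Set.eq_empty_of_forall_notMem fun s hs => hZX.subset ⟨Z.2.mul_mem ht s, hs⟩
  exact apply_eq_false_of_mem_omega (X := ⟨_, X.2.ppre (inInvHull_ptransl t)⟩) hpre hχ

theorem IsInvariant.omegaMax_subset_closure {K : Set (CharSpace M)} (hK : IsInvariant K)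
    (hKΩ : K ⊆ Omega M) (hKne : K.Nonempty) : OmegaMax M ⊆ closure K := by
  intro ω hω
  rw [mem_closure_iff]
  intro O hO hωO
  obtain ⟨I, u, hIu, hIO⟩ := isOpen_pi_iff.mp hO ω hωO
  obtain ⟨Z, hZ, hZI⟩ := hω.exists_separating I
  obtain ⟨t, ht⟩ := hω.2.1.2.1 Z hZ
  obtain ⟨χ, hχ⟩ := hKne
  refine ⟨translChar t χ, hIO fun X hX => ?_, hK.translChar_mem hKΩ hχ t⟩
  have hagree : translChar t χ X = ω X := by
    cases hωX : ω X
    · exact translChar_eq_false (hKΩ hχ) ht ((hZI X hX).2 hωX)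
    · exact translChar_eq_true (hKΩ hχ) ht ((hZI X hX).1 hωX)
  simpa [hagree] using (hIu X hX).2

end Translation

/-- Every nonempty closed invariant subset `K ⊆ Ω(S)` contains
`∂Ω(S)`.  Invariance: whenever `g ∈ I_ℓ(S)`, `χ ∈ K` with `χ(dom g) = 1`, the
character `X ↦ χ(g⁻¹(X))` again belongs to `K` (stated here by universally
quantifying over the character `χ'` determined by this rule). -/
theorem cstar_stmt3 {M : Type*} [Monoid M] [IsLeftCancelMul M]
    (K : Set (CharSpace M)) (hKΩ : K ⊆ Omega M)
    (hKne : K.Nonempty) (hKcl : IsClosed K)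
    (hKinv : ∀ g : M → Option M, InInvHull g → ∀ χ ∈ K,
      (∀ D : CIdeal M, D.1 = pdom g → χ D = true) →
      ∀ χ' : CharSpace M,
        (∀ X Y : CIdeal M, Y.1 = ppre g X.1 → χ' X = χ Y) → χ' ∈ K) :
    BoundaryOmega M ⊆ K :=
  closure_minimal
    ((IsInvariant.omegaMax_subset_closure hKinv hKΩ hKne).trans hKcl.closure_subset) hKcl

end SgC
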